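/- Let k > 0 and φ > 0, set c0 = k·coth(φ), fix ξ0 ∈ ℝ, let ξ = x − c0·t − ξ0, and let u(x,t) = k·sinh(φ)/(cos(kξ) + cosh(φ)). For λ ∈ ℝ define φ⁺(x,t) = e^{i λ x + i λ² t}·(1 + e^{i k ξ + φ})/(1 + e^{i k ξ − φ}). Then 1 + e^{i k ξ − φ} ≠ 0 for all real (x,t), and φ⁺ satisfies the first equation of the Lax pair of the Benjamin–Ono equation with φ⁻ ≡ 0: i ∂_x φ⁺ + λ φ⁺ + u φ⁺ = 0 at every real (x,t). -/

import Mathlib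

/-!
Write `z = exp (i k ξ)`, so `|z| = 1` and the denominator `1 + z e^{-φ}` cannot vanish.
Since `φ⁺` is a plane wave times `(1 + z e^φ) / (1 + z e^{-φ})`, the Lax equation reduces to
`u (1 + z e^φ) (1 + z e^{-φ}) = k (z e^φ - z e^{-φ})`, and both sides equal `2 z` times the two
sides of `u (cos kξ + cosh φ) = k sinh φ`.
-/

open Complex

theorem Complex.one_add_exp_ne_zero_of_re_ne_zero {w : ℂ} (hw : w.re ≠ 0) :
    1 + exp w ≠ 0 := by
  intro h
  have hnorm : Real.exp w.re = 1 := by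
    rw [← norm_exp, eq_neg_of_add_eq_zero_right h, norm_neg, norm_one]
  exact hw (Real.exp_eq_one_iff _ |>.mp hnorm)

theorem Complex.one_add_exp_add_mul_one_add_exp_sub (θ φ : ℂ) :
    (1 + exp (I * θ + φ)) * (1 + exp (I * θ - φ)) = 2 * exp (I * θ) * (cos θ + cosh φ) := by
  rw [cos, cosh, exp_add, exp_sub, show -θ * I = -(I * θ) by ring, mul_comm θ I, exp_neg,
    exp_neg]
  field_simp
  ring

theorem Complex.exp_add_sub_exp_sub (a φ : ℂ) :
    exp (a + φ) - exp (a - φ) = 2 * exp a * sinh φ := by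
  rw [sinh, exp_add, exp_sub, exp_neg]
  field_simp

theorem Real.cos_add_cosh_pos (θ : ℝ) {φ : ℝ} (hφ : φ ≠ 0) : 0 < cos θ + cosh φ := by
  linarith [neg_one_le_cos θ, one_lt_cosh.mpr hφ]

theorem HasDerivAt.cexp_mul_one_add_cexp_div {f g : ℝ → ℂ} {f' g' : ℂ} {x : ℝ} (φ : ℂ)
    (hf : HasDerivAt f f' x) (hg : HasDerivAt g g' x) (hD : 1 + cexp (g x - φ) ≠ 0) :
    HasDerivAt (fun y => cexp (f y) * (1 + cexp (g y + φ)) / (1 + cexp (g y - φ)))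
      (f' * (cexp (f x) * (1 + cexp (g x + φ)) / (1 + cexp (g x - φ))) +
        g' * cexp (f x) * (cexp (g x + φ) - cexp (g x - φ)) / (1 + cexp (g x - φ)) ^ 2) x := by
  refine ((hf.cexp.mul ((hg.add_const φ).cexp.const_add 1)).div
    ((hg.sub_const φ).cexp.const_add 1) hD).congr_deriv ?_
  dsimp only [Pi.mul_apply]
  field_simp
  ring

theorem lax_eigenfunction_phi_minus_zero_general (k φ ξ0 c0 lam : ℝ) (hφ : 0 < φ)
    (u : ℝ → ℝ → ℝ)
    (hu : ∀ x t : ℝ, u x t =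
      k * Real.sinh φ / (Real.cos (k * (x - c0 * t - ξ0)) + Real.cosh φ))
    (Φ : ℝ → ℝ → ℂ)
    (hΦ : ∀ x t : ℝ, Φ x t =
      Complex.exp (Complex.I * lam * x + Complex.I * (lam ^ 2) * t)
        * (1 + Complex.exp (Complex.I * (k * (x - c0 * t - ξ0)) + φ))
        / (1 + Complex.exp (Complex.I * (k * (x - c0 * t - ξ0)) - φ))) :
    ∀ x t : ℝ,
      (1 + Complex.exp (Complex.I * (k * (x - c0 * t - ξ0)) - φ)) ≠ 0 ∧
      Complex.I * deriv (fun y => Φ y t) x + lam * Φ x t + (u x t : ℂ) * Φ x t = 0 := by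
  intro x t
  have hD : 1 + exp (I * (k * (x - c0 * t - ξ0)) - φ) ≠ 0 :=
    one_add_exp_ne_zero_of_re_ne_zero (by simpa using hφ.ne')
  refine ⟨hD, ?_⟩
  have hphase : HasDerivAt (fun y : ℝ => I * lam * y + I * lam ^ 2 * t) (I * lam) x := by
    simpa using (((hasDerivAt_id (x : ℂ)).const_mul (I * lam)).add_const
      (I * lam ^ 2 * t)).comp_ofReal
  have harg : HasDerivAt (fun y : ℝ => I * (k * (y - c0 * t - ξ0))) (I * k) x := by
    simpa [mul_assoc] using (((((hasDerivAt_id (x : ℂ)).sub_const (c0 * t : ℂ)).sub_const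
      (ξ0 : ℂ)).const_mul (k : ℂ)).const_mul I).comp_ofReal
  have hwave : (u x t : ℂ) * (cos (k * (x - c0 * t - ξ0)) + cosh φ) = k * sinh φ := by
    rw [hu]; push_cast
    exact div_mul_cancel₀ _ (by exact_mod_cast (Real.cos_add_cosh_pos _ hφ.ne').ne')
  rw [((hphase.cexp_mul_one_add_cexp_div φ harg hD).congr_of_eventuallyEq
    (.of_forall (hΦ · t))).deriv, hΦ]
  generalize (k : ℂ) * (x - c0 * t - ξ0) = θ at hD hwave ⊢
  have hkey : (u x t : ℂ) * ((1 + exp (I * θ + φ)) * (1 + exp (I * θ - φ))) =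
      k * (exp (I * θ + φ) - exp (I * θ - φ)) := by
    rw [one_add_exp_add_mul_one_add_exp_sub, exp_add_sub_exp_sub]
    linear_combination 2 * exp (I * θ) * hwave
  generalize exp (I * lam * x + I * lam ^ 2 * t) = E
  generalize exp (I * θ + φ) = P at hkey ⊢
  generalize exp (I * θ - φ) = M at hD hkey ⊢
  field_simp
  linear_combination E * hkey + E * (lam * (1 + P) * (1 + M) + k * (P - M)) * I_sq

/-- the function `φ⁺(x,t) = e^{iλx + iλ²t}(1 + e^{ikξ+φ})/(1 + e^{ikξ−φ})`
satisfies the first Lax equation `i ∂_x φ⁺ + λ φ⁺ + u φ⁺ = 0` (with `φ⁻ ≡ 0`)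
of the Benjamin–Ono equation on the traveling periodic wave background. -/
theorem lax_eigenfunction_phi_minus_zero (k φ ξ0 c0 lam : ℝ) (hk : 0 < k) (hφ : 0 < φ)
    (hc0 : c0 = k * Real.cosh φ / Real.sinh φ)
    (u : ℝ → ℝ → ℝ)
    (hu : ∀ x t : ℝ, u x t =
      k * Real.sinh φ / (Real.cos (k * (x - c0 * t - ξ0)) + Real.cosh φ))
    (Φ : ℝ → ℝ → ℂ)
    (hΦ : ∀ x t : ℝ, Φ x t =
      Complex.exp (Complex.I * lam * x + Complex.I * (lam ^ 2) * t)
        * (1 + Complex.exp (Complex.I * (k * (x - c0 * t - ξ0)) + φ))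
        / (1 + Complex.exp (Complex.I * (k * (x - c0 * t - ξ0)) - φ))) :
    ∀ x t : ℝ,
      (1 + Complex.exp (Complex.I * (k * (x - c0 * t - ξ0)) - φ)) ≠ 0 ∧
      Complex.I * deriv (fun y => Φ y t) x + lam * Φ x t + (u x t : ℂ) * Φ x t = 0 :=
  lax_eigenfunction_phi_minus_zero_general k φ ξ0 c0 lam hφ u hu Φ hΦ
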